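/- arXiv:1310.3861 — 6 statements merged into one kernel-verified Lean document; each statement's English description precedes it below -/
import Mathlib

section
/- If f : G → ℝ is a homogeneous quasimorphism with defect at most D, and f(g) = 1 for some g ∈ G, then the stable commutator length of g satisfies scl(g) ≥ 1/(2D). -/
open scoped ENNReal
open scoped commutatorElement

/-- `g` is a product of `n` commutators. -/
def IsProdCommutators {G : Type*} [Group G] (g : G) (n : ℕ) : Prop :=
  ∃ a b : Fin n → G, g = (List.ofFn (fun i => ⁅a i, b i⁆)).prod

/-- Commutator length, valued in `ℝ≥0∞` (`∞` if `g` is not a product of commutators). -/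
noncomputable def cl {G : Type*} [Group G] (g : G) : ℝ≥0∞ :=
  sInf ((fun n : ℕ => (n : ℝ≥0∞)) '' {n | IsProdCommutators g n})

/-- Stable commutator length: the limit (= infimum, by subadditivity) of `cl(gⁿ)/n`. -/
noncomputable def scl {G : Type*} [Group G] (g : G) : ℝ≥0∞ :=
  ⨅ n : ℕ+, cl (g ^ (n : ℕ)) / (n : ℕ+)

/-! A homogeneous quasimorphism `f` is conjugation invariant, since conjugation moves it by at
most `2D` and homogeneity scales that error down to zero. Hence `|f ⁅a, b⁆| ≤ D`, and a product
of `n` commutators has `|f| ≤ 2Dn`. Applied to `gᵏ`, where `f = k`, this gives `cl(gᵏ) ≥ k/(2D)`. -/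

lemma eq_zero_of_forall_nat_mul_abs_le {x C : ℝ} (h : ∀ n : ℕ, n * |x| ≤ C) : x = 0 := by
  by_contra hx
  obtain ⟨n, hn⟩ := exists_nat_gt (C / |x|)
  rw [div_lt_iff₀ (abs_pos.mpr hx)] at hn
  linarith [h n]

lemma ENNReal.ofReal_div_ofReal_le_of_le_mul {a b c : ℝ} (hc : 0 ≤ c) (h : a ≤ b * c) :
    ENNReal.ofReal a / ENNReal.ofReal b ≤ ENNReal.ofReal c := by
  refine ENNReal.div_le_of_le_mul' ?_
  rw [← ENNReal.ofReal_mul' hc]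
  exact ENNReal.ofReal_le_ofReal h

namespace HomogeneousQuasimorphism

variable {G : Type*} [Group G] {f : G → ℝ} {D : ℝ}

lemma map_inv (hhom : ∀ (g : G) (n : ℤ), f (g ^ n) = n * f g) (g : G) :
    f g⁻¹ = -f g := by
  simpa using hhom g (-1)

lemma map_pow (hhom : ∀ (g : G) (n : ℤ), f (g ^ n) = n * f g) (g : G) (n : ℕ) :
    f (g ^ n) = n * f g := by
  simpa using hhom g n

variable (hqm : ∀ g h : G, |f (g * h) - f g - f h| ≤ D)
  (hhom : ∀ (g : G) (n : ℤ), f (g ^ n) = n * f g)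
include hqm hhom

lemma abs_map_conj_sub_le (h x : G) : |f (h * x * h⁻¹) - f x| ≤ 2 * D := by
  have hsplit : f (h * x * h⁻¹) - f x
      = (f (h * (x * h⁻¹)) - f h - f (x * h⁻¹)) + (f (x * h⁻¹) - f x - f h⁻¹) := by
    rw [map_inv hhom, mul_assoc]; ring
  rw [hsplit]
  linarith [abs_add_le (f (h * (x * h⁻¹)) - f h - f (x * h⁻¹)) (f (x * h⁻¹) - f x - f h⁻¹),
    hqm h (x * h⁻¹), hqm x h⁻¹]

lemma map_conj (h g : G) : f (h * g * h⁻¹) = f g := by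
  suffices f (h * g * h⁻¹) - f g = 0 by linarith
  refine eq_zero_of_forall_nat_mul_abs_le (C := 2 * D) fun n => ?_
  have hn := abs_map_conj_sub_le hqm hhom h (g ^ n)
  rwa [← conj_pow, map_pow hhom, map_pow hhom, ← mul_sub,
    abs_mul, Nat.abs_cast] at hn

lemma abs_map_commutatorElement_le (a b : G) : |f ⁅a, b⁆| ≤ D := by
  have h := hqm (a * b * a⁻¹) b⁻¹
  rwa [map_conj hqm hhom, map_inv hhom, ← commutatorElement_def,
    sub_neg_eq_add, sub_add_cancel] at h

lemma abs_map_list_prod_le {C : ℝ} {l : List G} (hl : ∀ x ∈ l, |f x| ≤ C) :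
    |f l.prod| ≤ l.length * (C + D) := by
  induction l with
  | nil => simpa using map_pow hhom 1 0
  | cons x l ih =>
    rw [List.forall_mem_cons] at hl
    rw [List.prod_cons, List.length_cons, Nat.cast_succ]
    calc |f (x * l.prod)|
        = |(f (x * l.prod) - f x - f l.prod) + f x + f l.prod| := by ring_nf
      _ ≤ |f (x * l.prod) - f x - f l.prod| + |f x| + |f l.prod| := abs_add_three _ _ _
      _ ≤ (l.length + 1) * (C + D) := by linarith [hqm x l.prod, hl.1, ih hl.2]

lemma abs_map_le_of_isProdCommutators {x : G} {n : ℕ} (hx : IsProdCommutators x n) :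
    |f x| ≤ 2 * D * n := by
  obtain ⟨a, b, rfl⟩ := hx
  have h := abs_map_list_prod_le hqm hhom (C := D) (l := List.ofFn fun i => ⁅a i, b i⁆) <| by
    simpa [List.mem_ofFn] using fun i => abs_map_commutatorElement_le hqm hhom (a i) (b i)
  rw [List.length_ofFn] at h
  linarith

end HomogeneousQuasimorphism

section CommutatorLength

variable {G : Type*} [Group G]

lemma le_cl {x : G} {c : ℝ≥0∞} (h : ∀ n, IsProdCommutators x n → c ≤ n) : c ≤ cl x :=
  le_sInf <| by rintro _ ⟨n, hn, rfl⟩; exact h n hn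

lemma le_scl {g : G} {c : ℝ≥0∞} (h : ∀ k : ℕ+, c * (k : ℕ) ≤ cl (g ^ (k : ℕ))) : c ≤ scl g :=
  le_iInf fun k => (ENNReal.le_div_iff_mul_le (Or.inl (by simp)) (Or.inl (by simp))).2 (h k)

end CommutatorLength

/-- Bavard duality, easy direction: if `f` is a homogeneous quasimorphism with defect at
most `D` and `f g = 1`, then `scl(g) ≥ 1/(2D)`. -/
theorem scl_ge_of_quasimorphism {G : Type*} [Group G] (f : G → ℝ) (D : ℝ)
    (hqm : ∀ g h : G, |f (g * h) - f g - f h| ≤ D)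
    (hhom : ∀ (g : G) (n : ℤ), f (g ^ n) = n * f g)
    (g : G) (hg : f g = 1) :
    1 / ENNReal.ofReal (2 * D) ≤ scl g := by
  refine le_scl fun k => le_cl fun n hn => ?_
  have hk : (k : ℝ) ≤ 2 * D * n := by
    simpa [HomogeneousQuasimorphism.map_pow hhom, hg] using
      HomogeneousQuasimorphism.abs_map_le_of_isProdCommutators hqm hhom hn
  rw [one_div, mul_comm, ← div_eq_mul_inv, ← ENNReal.ofReal_natCast,
    ← ENNReal.ofReal_natCast (n : ℕ)]
  exact ENNReal.ofReal_div_ofReal_le_of_le_mul n.cast_nonneg hk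
end

section
/- If f : G → ℝ is a homogeneous quasimorphism with defect at most D, and gⁿ is a product of m commutators in G, then |f(g)| ≤ 2mD/n. -/
open scoped commutatorElement

/-!
A homogeneous quasimorphism is conjugation invariant: `f (h xᵏ h⁻¹) - f (xᵏ)` is bounded by `2D`
uniformly in `k`, yet equals `k (f (h x h⁻¹) - f x)`. Hence `f ⁅a, b⁆ = f (a b a⁻¹ · b⁻¹)` is within
`D` of `f (a b a⁻¹) + f b⁻¹ = f b - f b = 0`, and a product of `m` commutators has `|f| ≤ m (D + D)`. Homogeneity turns
this bound on `f (gⁿ)` into `n |f g| ≤ 2mD`.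
-/

theorem eq_zero_of_forall_nat_mul_abs_le_s1 {α : Type*} [Field α] [LinearOrder α]
    [IsStrictOrderedRing α] [Archimedean α] {a C : α} (h : ∀ k : ℕ, k * |a| ≤ C) : a = 0 := by
  by_contra ha
  obtain ⟨k, hk⟩ := exists_nat_gt (C / |a|)
  rw [div_lt_iff₀ (abs_pos.mpr ha)] at hk
  exact (h k).not_gt hk

section Quasimorphism

variable {G : Type*} [Group G] {f : G → ℝ} {D : ℝ}

theorem abs_map_mul_mul_sub_le (hqm : ∀ g h : G, |f (g * h) - f g - f h| ≤ D) (a b c : G) :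
    |f (a * b * c) - f a - f b - f c| ≤ 2 * D := by
  calc |f (a * b * c) - f a - f b - f c|
      = |(f (a * b * c) - f (a * b) - f c) + (f (a * b) - f a - f b)| := by ring_nf
    _ ≤ |f (a * b * c) - f (a * b) - f c| + |f (a * b) - f a - f b| := abs_add_le _ _
    _ ≤ 2 * D := by linarith [hqm (a * b) c, hqm a b]

theorem map_one_of_zpow (hhom : ∀ (g : G) (n : ℤ), f (g ^ n) = n * f g) : f 1 = 0 := by
  simpa using hhom 1 0

theorem map_inv_of_zpow (hhom : ∀ (g : G) (n : ℤ), f (g ^ n) = n * f g) (g : G) :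
    f g⁻¹ = -f g := by
  simpa using hhom g (-1)

theorem map_pow_of_zpow (hhom : ∀ (g : G) (n : ℤ), f (g ^ n) = n * f g) (g : G) (n : ℕ) :
    f (g ^ n) = n * f g := by
  simpa using hhom g n

theorem map_conj_of_zpow (hqm : ∀ g h : G, |f (g * h) - f g - f h| ≤ D)
    (hhom : ∀ (g : G) (n : ℤ), f (g ^ n) = n * f g) (h x : G) :
    f (h * x * h⁻¹) = f x := by
  suffices f (h * x * h⁻¹) - f x = 0 by linarith
  refine eq_zero_of_forall_nat_mul_abs_le_s1 (C := 2 * D) fun k => ?_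
  have hk := abs_map_mul_mul_sub_le hqm h (x ^ k) h⁻¹
  rw [map_inv_of_zpow hhom, ← conj_pow, map_pow_of_zpow hhom, map_pow_of_zpow hhom] at hk
  rwa [show k * f (h * x * h⁻¹) - f h - k * f x - -f h = k * (f (h * x * h⁻¹) - f x) by ring,
    abs_mul, Nat.abs_cast] at hk

theorem abs_map_commutatorElement_le (hqm : ∀ g h : G, |f (g * h) - f g - f h| ≤ D)
    (hhom : ∀ (g : G) (n : ℤ), f (g ^ n) = n * f g) (a b : G) : |f ⁅a, b⁆| ≤ D := by
  have hab := hqm (a * b * a⁻¹) b⁻¹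
  rwa [map_conj_of_zpow hqm hhom, map_inv_of_zpow hhom, sub_neg_eq_add, sub_add_cancel,
    ← commutatorElement_def] at hab

theorem abs_map_list_prod_le (hqm : ∀ g h : G, |f (g * h) - f g - f h| ≤ D) (hf1 : f 1 = 0)
    {C : ℝ} {l : List G} (hl : ∀ x ∈ l, |f x| ≤ C) : |f l.prod| ≤ l.length * (C + D) := by
  induction l with
  | nil => simp [hf1]
  | cons a t ih =>
    have ha := hl a List.mem_cons_self
    have ht := ih fun x hx => hl x (List.mem_cons_of_mem a hx)
    have hdef := hqm a t.prod
    rw [List.prod_cons, List.length_cons, Nat.cast_succ]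
    calc |f (a * t.prod)|
        = |(f (a * t.prod) - f a - f t.prod) + f a + f t.prod| := by ring_nf
      _ ≤ |f (a * t.prod) - f a - f t.prod| + |f a| + |f t.prod| := abs_add_three _ _ _
      _ ≤ (t.length + 1) * (C + D) := by linarith

end Quasimorphism

/-- If `f : G → ℝ` is a homogeneous quasimorphism with defect at most `D`, and `gⁿ` is a
product of `m` commutators, then `|f(g)| ≤ 2mD/n`. -/
theorem abs_le_of_prod_commutators {G : Type*} [Group G] (f : G → ℝ) (D : ℝ)
    (hqm : ∀ g h : G, |f (g * h) - f g - f h| ≤ D)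
    (hhom : ∀ (g : G) (n : ℤ), f (g ^ n) = n * f g)
    (g : G) (m n : ℕ) (hn : n ≠ 0) (h : IsProdCommutators (g ^ n) m) :
    |f g| ≤ 2 * m * D / n := by
  obtain ⟨a, b, hab⟩ := h
  have hpow : |f (g ^ n)| ≤ m * (D + D) := by
    simpa [hab] using abs_map_list_prod_le hqm (map_one_of_zpow hhom) (C := D)
      (l := List.ofFn fun i => ⁅a i, b i⁆) (by
        simpa using fun i => abs_map_commutatorElement_le hqm hhom (a i) (b i))
  rw [map_pow_of_zpow hhom, abs_mul, Nat.abs_cast] at hpow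
  rw [le_div_iff₀ (by positivity)]
  linarith
end

section
/- In any group G, if elements t and a satisfy t·aᵐ·t⁻¹ = aˡ with m ≠ ℓ, then the stable commutator length of a is zero. -/
open scoped ENNReal
open scoped commutatorElement

/-!
If `t aᵐ t⁻¹ = aˡ` then `⁅t, a^(m e)⁆ = a^((l - m) e)` for every integer `e`, so every power of
`a^|l - m|` is a single commutator. Hence `cl(a^(|l - m| n)) ≤ 1` for all `n`, and
`scl a ≤ 1 / (|l - m| n) → 0`.
-/

open Filter Topology

section CommutatorLength

variable {G : Type*} [Group G]

theorem cl_le_of_isProdCommutators {g : G} {n : ℕ} (h : IsProdCommutators g n) : cl g ≤ n :=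
  sInf_le ⟨n, h, rfl⟩

theorem cl_commutatorElement_le_one (x y : G) : cl ⁅x, y⁆ ≤ 1 := by
  simpa using cl_le_of_isProdCommutators (g := ⁅x, y⁆) (n := 1) ⟨fun _ => x, fun _ => y, by simp⟩

theorem scl_le_cl_pow_div (g : G) (n : ℕ+) : scl g ≤ cl (g ^ (n : ℕ)) / (n : ℕ) :=
  iInf_le (fun n : ℕ+ => cl (g ^ (n : ℕ)) / (n : ℕ+)) n

theorem scl_eq_zero_of_cl_pow_mul_le {g : G} {k : ℕ} (hk : 0 < k) {C : ℝ≥0∞} (hC : C ≠ ∞)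
    (h : ∀ n, cl (g ^ (k * n)) ≤ C) : scl g = 0 := by
  have bound : ∀ n : ℕ, 1 ≤ n → scl g ≤ C * (n : ℝ≥0∞)⁻¹ := by
    intro n hn
    calc scl g ≤ cl (g ^ (k * n)) / (k * n : ℕ) :=
          scl_le_cl_pow_div g ⟨k * n, Nat.mul_pos hk hn⟩
      _ ≤ C / n := by
          gcongr
          · exact h n
          · exact_mod_cast Nat.le_mul_of_pos_left n hk
      _ = C * (n : ℝ≥0∞)⁻¹ := div_eq_mul_inv _ _
  have lim : Tendsto (fun n : ℕ => C * (n : ℝ≥0∞)⁻¹) atTop (𝓝 0) := by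
    simpa using ENNReal.Tendsto.const_mul ENNReal.tendsto_inv_nat_nhds_zero (Or.inr hC)
  exact le_antisymm (ge_of_tendsto lim (eventually_atTop.2 ⟨1, bound⟩)) zero_le

end CommutatorLength

theorem zpow_sub_mul_eq_commutatorElement {G : Type*} [Group G] {t a : G} {m l : ℤ}
    (rel : t * a ^ m * t⁻¹ = a ^ l) (e : ℤ) : a ^ ((l - m) * e) = ⁅t, a ^ (m * e)⁆ := by
  rw [commutatorElement_def, zpow_mul a m, ← conj_zpow, rel, ← zpow_mul, ← zpow_neg,
    ← zpow_mul, ← zpow_add]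
  ring_nf

/-- In any group, if `t aᵐ t⁻¹ = aˡ` with `m ≠ ℓ`, then `scl(a) = 0`. -/
theorem scl_eq_zero_of_baumslag_solitar_relation {G : Type*} [Group G] (t a : G)
    (m l : ℤ) (hml : m ≠ l) (rel : t * a ^ m * t⁻¹ = a ^ l) :
    scl a = 0 := by
  have hd : 0 < (l - m).natAbs := Int.natAbs_pos.mpr (sub_ne_zero.mpr hml.symm)
  refine scl_eq_zero_of_cl_pow_mul_le hd ENNReal.one_ne_top fun n => ?_
  have hcomm : a ^ ((l - m).natAbs * n) = ⁅t, a ^ (m * ((l - m).sign * n))⁆ := by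
    rw [← zpow_sub_mul_eq_commutatorElement rel, ← mul_assoc, Int.mul_sign_self, ← zpow_natCast]
    push_cast
    rfl
  rw [hcomm]
  exact cl_commutatorElement_le_one _ _
end

section
/- Let G act on a tree T and let g, h ∈ G both fix a common vertex v of T. If the stabilizer of each edge incident to v is central in the stabilizer of v, then for any subtree S containing v, the pointwise stabilizer of S equals the pointwise stabilizer of hS. -/
set_option linter.unusedVariables false

variable {V : Type*}

/-- A group `G` acts on the simplicial tree `T` by graph automorphisms, without
inversions. -/
def IsTreeAction (T : SimpleGraph V) (G : Type*) [Group G] [MulAction G V] : Prop :=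
  T.IsTree ∧ (∀ (g : G) (u v : V), T.Adj u v → T.Adj (g • u) (g • v)) ∧
    (∀ (g : G) (u v : V), T.Adj u v → ¬(g • u = v ∧ g • v = u))

/-- `w` lies on the geodesic segment from `u` to `v`. -/
def OnSeg (T : SimpleGraph V) (u w v : V) : Prop :=
  T.dist u w + T.dist w v = T.dist u v

/-- `g` is elliptic: it fixes a vertex of `T`. -/
def Elliptic (T : SimpleGraph V) {G : Type*} [Group G] [MulAction G V] (g : G) : Prop :=
  ∃ v : V, g • v = v

/-- The translation length of `g`: the minimal displacement of a vertex. -/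
noncomputable def transLen (T : SimpleGraph V) {G : Type*} [Group G] [MulAction G V]
    (g : G) : ℕ :=
  sInf {n : ℕ | ∃ v : V, T.dist v (g • v) = n}

/-- The characteristic subtree (the axis, for hyperbolic `g`): the set of vertices of
minimal displacement. -/
def Axis (T : SimpleGraph V) {G : Type*} [Group G] [MulAction G V] (g : G) : Set V :=
  {v : V | T.dist v (g • v) = transLen T g}

/-- For `p, q` on the axis of a hyperbolic `g`: `q` lies (weakly) in the positive
`g`-direction from `p`. -/
def Ahead (T : SimpleGraph V) {G : Type*} [Group G] [MulAction G V] (g : G)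
    (p q : V) : Prop :=
  T.dist p (g • q) = T.dist p q + transLen T g

/-! An element `g` fixing the convex set `S` pointwise fixes `v` and, unless `S = {v}`, the first
edge of a geodesic from `v` into `S`; so it lies in an edge stabilizer at `v` and commutes with
`h`, whence `g` fixes `h • S` as well. The converse is the same statement applied to `h⁻¹` and
the conjugate `h⁻¹ * g * h`. -/

theorem SimpleGraph.Connected.exists_adj_onSeg {V : Type*} {T : SimpleGraph V}
    (hconn : T.Connected) {v x : V} (hvx : v ≠ x) : ∃ u, T.Adj v u ∧ OnSeg T v u x := by
  obtain ⟨p, hp⟩ := (hconn v x).exists_walk_length_eq_dist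
  cases p with
  | nil => exact absurd rfl hvx
  | @cons _ u _ hvu q =>
    refine ⟨u, hvu, ?_⟩
    have hvu_dist : T.dist v u = 1 := SimpleGraph.dist_eq_one_iff_adj.mpr hvu
    have hux : T.dist u x ≤ q.length := SimpleGraph.dist_le q
    have htri : T.dist v x ≤ T.dist v u + T.dist u x := hconn.dist_triangle
    rw [SimpleGraph.Walk.length_cons] at hp
    unfold OnSeg
    omega

theorem forall_smul_smul_eq_of_forall_smul_eq {V : Type*} {T : SimpleGraph V} {G : Type*}
    [Group G] [MulAction G V] (hconn : T.Connected) {S : Set V} {v : V} (hv : v ∈ S)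
    (hsub : ∀ u w, u ∈ S → w ∈ S → ∀ x, OnSeg T u x w → x ∈ S)
    {h : G} (hh : h • v = v)
    (hcent : ∀ u : V, T.Adj v u → ∀ c x : G,
      c • v = v → c • u = u → x • v = v → c * x = x * c)
    {g : G} (hg : ∀ x ∈ S, g • x = x) :
    ∀ x ∈ S, g • h • x = h • x := by
  intro x hx
  obtain rfl | hvx := eq_or_ne v x
  · rw [hh, hg v hx]
  obtain ⟨u, hvu, hseg⟩ := hconn.exists_adj_onSeg hvx
  have hcomm : g * h = h * g := hcent u hvu g h (hg v hv) (hg u (hsub v x hv hx u hseg)) hh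
  rw [← mul_smul, hcomm, mul_smul, hg x hx]

/-- If `h` fixes a vertex `v` of a subtree `S`, and the stabilizer of each edge at `v` is
central in the stabilizer of `v`, then the pointwise stabilizer of `S` equals the
pointwise stabilizer of `h • S`. -/
theorem pointwise_stabilizer_rotate {V : Type*} (T : SimpleGraph V) {G : Type*} [Group G]
    [MulAction G V] (hT : IsTreeAction T G)
    (S : Set V) (v : V) (hv : v ∈ S)
    (hsub : ∀ u w, u ∈ S → w ∈ S → ∀ x, OnSeg T u x w → x ∈ S)
    (h : G) (hh : h • v = v)
    (hcent : ∀ u : V, T.Adj v u → ∀ c x : G,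
      c • v = v → c • u = u → x • v = v → c * x = x * c) :
    ∀ g : G, (∀ x ∈ S, g • x = x) ↔ (∀ x ∈ S, g • (h • x) = h • x) := by
  intro g
  have hconn : T.Connected := hT.1.connected
  refine ⟨forall_smul_smul_eq_of_forall_smul_eq hconn hv hsub hh hcent, fun hg x hx => ?_⟩
  have hh_inv : h⁻¹ • v = v := by rw [inv_smul_eq_iff, hh]
  have hconj : ∀ y ∈ S, (h⁻¹ * g * h) • y = y := fun y hy => by
    rw [mul_smul, mul_smul, hg y hy, inv_smul_smul]
  have := forall_smul_smul_eq_of_forall_smul_eq hconn hv hsub hh_inv hcent hconj x hx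
  simpa [mul_smul] using this
end

section
/- Let G be a group, g, a₁, …, aₖ ∈ G, and n ≠ 0. Suppose there is an identity expressing that some product of conjugates of powers of g of total exponent n times a product of the aᵢ lies in the commutator subgroup, realized by a surface S of Euler characteristic χ(S) with boundary components mapping to a₁,…,aₖ and to powers of g of total degree n. Then scl(g) ≤ −χ(S)/(2n) + (1/n)·Σᵢ scl(aᵢ). -/
/-!
Write the boundary words of the surface as `V₁, …, V_r` and turn each handle into two more
boundary words, using `⁅x, y⁆⁻¹ = y * (x * y⁻¹ * x⁻¹)`; the `r + 2h` words then multiply to `1`.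
Since `x ^ (2p) * y ^ (2p) * ((x * y) ^ (2p))⁻¹` is a product of `p` commutators (a degree-`2p`
cover of a pair of pants), the `2p`-th powers of `s` words with product `1` multiply to a product
of `(s - 2) * p` commutators, i.e. `-χ(S) * p` here. Collecting the conjugates of powers of `g`
into `g ^ (2pn)` costs one commutator each, and `aᵢ ^ (2p)` costs `cl (aᵢ ^ (2p)) ≈ 2p * scl aᵢ`
once `2p` is a multiple of good exponents for all `aᵢ`. Dividing by `2p|n|` and letting `p → ∞`
gives the bound.
-/

open scoped ENNReal
open scoped commutatorElement

namespace IsProdCommutators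

variable {G : Type*} [Group G]

theorem iff_exists_list {x : G} {s : ℕ} :
    IsProdCommutators x s ↔
      ∃ l : List (G × G), l.length = s ∧ x = (l.map fun q => ⁅q.1, q.2⁆).prod := by
  constructor
  · rintro ⟨a, b, rfl⟩
    exact ⟨List.ofFn fun i => (a i, b i), by simp, by simp [List.map_ofFn, Function.comp_def]⟩
  · rintro ⟨l, rfl, rfl⟩
    exact ⟨fun i => l[i].1, fun i => l[i].2,
      by rw [← List.ofFn_getElem_eq_map]; rfl⟩

theorem one : IsProdCommutators (1 : G) 0 :=
  iff_exists_list.2 ⟨[], rfl, rfl⟩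

theorem commutatorElement (a b : G) : IsProdCommutators ⁅a, b⁆ 1 :=
  iff_exists_list.2 ⟨[(a, b)], rfl, by simp⟩

theorem mul {x y : G} {s t : ℕ} (hx : IsProdCommutators x s) (hy : IsProdCommutators y t) :
    IsProdCommutators (x * y) (s + t) := by
  obtain ⟨l, rfl, rfl⟩ := iff_exists_list.1 hx
  obtain ⟨l', rfl, rfl⟩ := iff_exists_list.1 hy
  exact iff_exists_list.2 ⟨l ++ l', by simp, by simp⟩

theorem inv {x : G} {s : ℕ} (hx : IsProdCommutators x s) : IsProdCommutators x⁻¹ s := by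
  obtain ⟨l, rfl, rfl⟩ := iff_exists_list.1 hx
  refine iff_exists_list.2 ⟨(l.map Prod.swap).reverse, by simp, ?_⟩
  simp [List.prod_inv_reverse, Function.comp_def, commutatorElement_inv, List.map_reverse]

theorem map {H : Type*} [Group H] (f : G →* H) {x : G} {s : ℕ} (hx : IsProdCommutators x s) :
    IsProdCommutators (f x) s := by
  obtain ⟨a, b, rfl⟩ := hx
  exact ⟨f ∘ a, f ∘ b, by simp [map_list_prod, List.map_ofFn, Function.comp_def]⟩

theorem conj {x : G} {s : ℕ} (c : G) (hx : IsProdCommutators x s) :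
    IsProdCommutators (c * x * c⁻¹) s :=
  hx.map (MulAut.conj c).toMonoidHom

theorem mono {x : G} {s t : ℕ} (hx : IsProdCommutators x s) (hst : s ≤ t) :
    IsProdCommutators x t := by
  obtain ⟨u, rfl⟩ := Nat.exists_eq_add_of_le hst
  induction u with
  | zero => exact hx
  | succ u ih => simpa [← add_assoc] using (ih (by omega)).mul (commutatorElement 1 1)

theorem pow {x : G} {s : ℕ} (hx : IsProdCommutators x s) (m : ℕ) :
    IsProdCommutators (x ^ m) (m * s) := by
  induction m with
  | zero => simpa using one
  | succ m ih => simpa [pow_succ, Nat.succ_mul] using ih.mul hx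

theorem zpow_natAbs {x : G} {z : ℤ} {s : ℕ} (hx : IsProdCommutators (x ^ z) s) :
    IsProdCommutators (x ^ z.natAbs) s := by
  rcases Int.natAbs_eq z with h | h
  · rwa [h, zpow_natCast] at hx
  · rw [h, zpow_neg, zpow_natCast] at hx
    simpa using hx.inv

theorem prod_ofFn {k : ℕ} {f : Fin k → G} {t : Fin k → ℕ}
    (hf : ∀ i, IsProdCommutators (f i) (t i)) :
    IsProdCommutators (List.ofFn f).prod (∑ i, t i) := by
  induction k with
  | zero => simpa using one
  | succ k ih =>
    rw [List.ofFn_succ, List.prod_cons, Fin.sum_univ_succ]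
    exact (hf 0).mul (ih fun i => hf i.succ)

end IsProdCommutators

section Surfaces

variable {G : Type*} [Group G]

theorem isProdCommutators_pow_mul_pow_mul_inv (x y : G) (p : ℕ) :
    IsProdCommutators (x ^ (2 * p) * y ^ (2 * p) * ((x * y) ^ (2 * p))⁻¹) p := by
  induction p with
  | zero => simpa using IsProdCommutators.one
  | succ p ih =>
    have key : x ^ (2 * (p + 1)) * y ^ (2 * (p + 1)) * ((x * y) ^ (2 * (p + 1)))⁻¹ =
        x ^ 2 * (x ^ (2 * p) * y ^ (2 * p) * ((x * y) ^ (2 * p))⁻¹) * (x ^ 2)⁻¹ *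
          ⁅x ^ 2 * (x * y) ^ (2 * p) * x⁻¹, x * y * x⁻¹ * x⁻¹⁆ := by
      rw [show 2 * (p + 1) = 2 * p + 2 by ring, pow_add x, pow_add y,
        show (x * y) ^ (2 * p + 2) = x * y * (x * y) ^ (2 * p) * (x * y) by
          rw [pow_succ, pow_succ']]
      generalize (x * y) ^ (2 * p) = u
      simp only [commutatorElement_def]
      group
    rw [key]
    exact (ih.conj _).mul (.commutatorElement _ _)

theorem isProdCommutators_prod_map_pow_mul_inv (p : ℕ) : ∀ l : List G,
    IsProdCommutators ((l.map (· ^ (2 * p))).prod * (l.prod ^ (2 * p))⁻¹) ((l.length - 1) * p)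
  | [] => by simpa using IsProdCommutators.one
  | [w] => by simpa using IsProdCommutators.one
  | w :: v :: l => by
    have key : ((w :: v :: l).map (· ^ (2 * p))).prod * ((w :: v :: l).prod ^ (2 * p))⁻¹ =
        w ^ (2 * p) * (((v :: l).map (· ^ (2 * p))).prod * ((v :: l).prod ^ (2 * p))⁻¹) *
          (w ^ (2 * p))⁻¹ *
        (w ^ (2 * p) * (v :: l).prod ^ (2 * p) * ((w * (v :: l).prod) ^ (2 * p))⁻¹) := by
      simp only [List.map_cons, List.prod_cons]
      group
    rw [key]
    simpa [Nat.succ_mul] using ((isProdCommutators_prod_map_pow_mul_inv p (v :: l)).conj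
      (w ^ (2 * p))).mul (isProdCommutators_pow_mul_pow_mul_inv w (v :: l).prod p)

theorem isProdCommutators_prod_map_pow_of_prod_eq_one (p : ℕ) {l : List G} (hl : l.prod = 1) :
    IsProdCommutators ((l.map (· ^ (2 * p))).prod) ((l.length - 2) * p) := by
  match l, hl with
  | [], _ => simpa using IsProdCommutators.one
  | w :: l, hl =>
    have hw : w = l.prod⁻¹ := eq_inv_of_mul_eq_one_left hl
    have key : ((w :: l).map (· ^ (2 * p))).prod =
        (l.prod ^ (2 * p))⁻¹ * ((l.map (· ^ (2 * p))).prod * (l.prod ^ (2 * p))⁻¹) *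
          (l.prod ^ (2 * p))⁻¹⁻¹ := by
      simp only [List.map_cons, List.prod_cons, hw, inv_pow]
      group
    rw [key]
    simpa using (isProdCommutators_prod_map_pow_mul_inv p l).conj (l.prod ^ (2 * p))⁻¹

theorem isProdCommutators_prod_map_pow_of_prod_eq (p : ℕ) : ∀ (P : List (G × G)) {l : List G},
    l.prod = (P.map fun q => ⁅q.1, q.2⁆).prod →
      IsProdCommutators ((l.map (· ^ (2 * p))).prod) ((l.length + 2 * P.length - 2) * p + P.length)
  | [], l, hl => by simpa using isProdCommutators_prod_map_pow_of_prod_eq_one p (by simpa using hl)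
  | (x, y) :: P, l, hl => by
    have hrel : (y :: x * y⁻¹ * x⁻¹ :: l).prod = (P.map fun q => ⁅q.1, q.2⁆).prod := by
      simp only [List.prod_cons, hl, List.map_cons, commutatorElement_def]
      group
    have key : (l.map (· ^ (2 * p))).prod =
        ⁅x, y ^ (2 * p)⁆ * ((y :: x * y⁻¹ * x⁻¹ :: l).map (· ^ (2 * p))).prod := by
      simp only [List.map_cons, List.prod_cons, conj_pow, commutatorElement_def, inv_pow]
      group
    rw [key]
    convert (IsProdCommutators.commutatorElement x (y ^ (2 * p))).mul
      (isProdCommutators_prod_map_pow_of_prod_eq p P hrel) using 1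
    simp only [List.length_cons]
    rw [show l.length + 2 * (P.length + 1) - 2 = l.length + 1 + 1 + 2 * P.length - 2 by omega]
    ring

theorem isProdCommutators_prod_ofFn_conj_zpow_mul_inv (g : G) {j : ℕ} (d : Fin j → G)
    (f : Fin j → ℤ) :
    IsProdCommutators ((List.ofFn fun i => d i * g ^ f i * (d i)⁻¹).prod * (g ^ ∑ i, f i)⁻¹) j := by
  induction j with
  | zero => simpa using IsProdCommutators.one
  | succ j ih =>
    have key : (List.ofFn fun i => d i * g ^ f i * (d i)⁻¹).prod * (g ^ ∑ i, f i)⁻¹ =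
        ⁅d 0, g ^ f 0⁆ * (g ^ f 0 * ((List.ofFn fun i : Fin j => d i.succ * g ^ f i.succ *
          (d i.succ)⁻¹).prod * (g ^ ∑ i : Fin j, f i.succ)⁻¹) * (g ^ f 0)⁻¹) := by
      simp only [List.ofFn_succ, List.prod_cons, Fin.sum_univ_succ, zpow_add,
        commutatorElement_def]
      group
    rw [key]
    exact ((IsProdCommutators.commutatorElement _ _).mul ((ih _ _).conj _)).mono (by omega)

theorem isProdCommutators_zpow_of_relation (g : G) {k j h : ℕ} (a c : Fin k → G) (d : Fin j → G)
    (e : Fin j → ℤ)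
    (hrel : IsProdCommutators ((List.ofFn fun i => d i * g ^ e i * (d i)⁻¹).prod *
      (List.ofFn fun i => c i * a i * (c i)⁻¹).prod) h)
    (p : ℕ) {t : Fin k → ℕ} (ht : ∀ i, IsProdCommutators (a i ^ (2 * p)) (t i)) :
    IsProdCommutators (g ^ ((∑ i, e i) * (2 * p : ℕ)))
      (p * (2 * h + (k + j) - 2) + (h + j) + ∑ i, t i) := by
  obtain ⟨P, rfl, hP⟩ := IsProdCommutators.iff_exists_list.1 hrel
  set l := (List.ofFn fun i => d i * g ^ e i * (d i)⁻¹) ++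
    List.ofFn fun i => c i * a i * (c i)⁻¹
  have hboundary := isProdCommutators_prod_map_pow_of_prod_eq p P (l := l) (by simpa [l] using hP)
  have hpow : (l.map (· ^ (2 * p))).prod =
      (List.ofFn fun i => d i * g ^ (e i * (2 * p : ℕ)) * (d i)⁻¹).prod *
        (List.ofFn fun i => c i * a i ^ (2 * p) * (c i)⁻¹).prod := by
    simp only [l, List.map_append, List.map_ofFn, List.prod_append, Function.comp_def, conj_pow,
      zpow_mul, zpow_natCast]
  have hmerge := isProdCommutators_prod_ofFn_conj_zpow_mul_inv g d fun i => e i * (2 * p : ℕ)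
  have hcaps := IsProdCommutators.prod_ofFn fun i => (ht i).conj (c i)
  rw [hpow] at hboundary
  rw [← Finset.sum_mul] at hmerge
  convert (hmerge.inv.mul hboundary).mul hcaps.inv using 1
  · group
  · simp only [l, List.length_append, List.length_ofFn]
    ring_nf

end Surfaces

open Filter Topology in
theorem ENNReal.le_of_forall_le_add_mul_inv_natCast {a b K : ℝ≥0∞} (hK : K ≠ ⊤)
    (h : ∀ q : ℕ, 1 ≤ q → a ≤ b + K * (q : ℝ≥0∞)⁻¹) : a ≤ b := by
  have hlim : Tendsto (fun q : ℕ => b + K * (q : ℝ≥0∞)⁻¹) atTop (𝓝 b) := by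
    simpa using tendsto_const_nhds.add
      (ENNReal.Tendsto.const_mul ENNReal.tendsto_inv_nat_nhds_zero (Or.inr hK))
  exact ge_of_tendsto hlim (eventually_atTop.2 ⟨1, h⟩)

section StableCommutatorLength

variable {G : Type*} [Group G]

theorem cl_le {x : G} {s : ℕ} (hx : IsProdCommutators x s) : cl x ≤ s :=
  sInf_le ⟨s, hx, rfl⟩

theorem scl_le_div {x : G} {N s : ℕ} (hN : 0 < N) (hx : IsProdCommutators (x ^ N) s) :
    scl x ≤ s / N :=
  (iInf_le _ ⟨N, hN⟩).trans (ENNReal.div_le_div_right (cl_le hx) _)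

theorem exists_isProdCommutators_pow_le {x : G} (hx : scl x ≠ ⊤) {ε : ℝ≥0∞} (hε : ε ≠ 0) :
    ∃ N : ℕ, 0 < N ∧ ∃ s : ℕ, IsProdCommutators (x ^ N) s ∧ (s : ℝ≥0∞) ≤ N * (scl x + ε) := by
  obtain ⟨N, hN⟩ := iInf_lt_iff.1 (ENNReal.lt_add_right hx hε)
  rw [ENNReal.div_lt_iff (by simp) (by simp)] at hN
  obtain ⟨_, ⟨s, hs, rfl⟩, hlt⟩ := sInf_lt_iff.1 hN
  exact ⟨N, N.pos, s, hs, by rw [mul_comm]; exact_mod_cast hlt.le⟩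

theorem exists_forall_isProdCommutators_pow_mul_le {k : ℕ} {a : Fin k → G}
    (ha : ∀ i, scl (a i) ≠ ⊤) {ε : ℝ≥0∞} (hε : ε ≠ 0) :
    ∃ L : ℕ, 0 < L ∧ ∀ m : ℕ, ∃ s : Fin k → ℕ, ∀ i, IsProdCommutators (a i ^ (m * L)) (s i) ∧
      (s i : ℝ≥0∞) ≤ (m * L : ℕ) * (scl (a i) + ε) := by
  choose N hN s hs hle using fun i => exists_isProdCommutators_pow_le (ha i) hε
  refine ⟨∏ i, N i, Finset.prod_pos fun i _ => hN i, fun m =>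
    ⟨fun i => m * (∏ j, N j) / N i * s i, fun i => ?_⟩⟩
  obtain ⟨q, hq⟩ := (Finset.dvd_prod_of_mem N (Finset.mem_univ i)).mul_left m
  simp only [hq, Nat.mul_div_cancel_left _ (hN i)]
  refine ⟨by simpa [pow_mul] using (hs i).pow q, ?_⟩
  calc ((q * s i : ℕ) : ℝ≥0∞) ≤ q * (N i * (scl (a i) + ε)) := by
        push_cast; gcongr; exact hle i
    _ = ((N i * q : ℕ) : ℝ≥0∞) * (scl (a i) + ε) := by push_cast; ring

theorem scl_le_add_mul_inv_of_forall_isProdCommutators_pow {x : G} {k : ℕ} {a : Fin k → G}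
    (ha : ∀ i, scl (a i) ≠ ⊤) {N r : ℕ} (hN : 0 < N) (hr : 0 < r) {D C : ℕ}
    (h : ∀ (p : ℕ) (t : Fin k → ℕ), (∀ i, IsProdCommutators (a i ^ (r * p)) (t i)) →
      IsProdCommutators (x ^ (N * (r * p))) (p * D + C + ∑ i, t i))
    {q : ℕ} (hq : 1 ≤ q) :
    scl x ≤ D / (N * r : ℕ) + (1 / N) * ∑ i, scl (a i) + ((1 / N) * k + C) * (q : ℝ≥0∞)⁻¹ := by
  obtain ⟨L, hL, hs⟩ := exists_forall_isProdCommutators_pow_mul_le ha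
    (ε := (q : ℝ≥0∞)⁻¹) (by simp)
  obtain ⟨s, hs⟩ := hs (r * q)
  set p := q * L
  have hp : 0 < p := by positivity
  have hx := h p s fun i => by simpa [p, mul_assoc] using (hs i).1
  rw [show N * (r * p) = p * (N * r) by ring] at hx
  have hrp : ((r * p : ℕ) : ℝ≥0∞) ≠ 0 := by simp; omega
  have hsum : (∑ i, s i : ℝ≥0∞) ≤ (r * p : ℕ) * (∑ i, scl (a i) + k * (q : ℝ≥0∞)⁻¹) := by
    calc (∑ i, s i : ℝ≥0∞) ≤ ∑ i, ((r * p : ℕ) : ℝ≥0∞) * (scl (a i) + (q : ℝ≥0∞)⁻¹) :=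
          Finset.sum_le_sum fun i _ => by simpa [p, mul_assoc] using (hs i).2
      _ = _ := by rw [← Finset.mul_sum, Finset.sum_add_distrib]; simp
  calc scl x ≤ ((p * D + C + ∑ i, s i : ℕ) : ℝ≥0∞) / (p * (N * r) : ℕ) :=
        scl_le_div (by positivity) hx
    _ = ((p * D : ℕ) : ℝ≥0∞) / (p * (N * r) : ℕ) + (C : ℝ≥0∞) / (p * (N * r) : ℕ) +
          (∑ i, s i : ℝ≥0∞) / (p * (N * r) : ℕ) := by
        push_cast; rw [ENNReal.add_div, ENNReal.add_div]
    _ ≤ D / (N * r : ℕ) + C * (q : ℝ≥0∞)⁻¹ +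
          (1 / N) * (∑ i, scl (a i) + k * (q : ℝ≥0∞)⁻¹) := by
        refine add_le_add (add_le_add (le_of_eq ?_) ?_) ?_
        · push_cast
          exact ENNReal.mul_div_mul_left _ _ (by simp; omega) (by simp)
        · rw [← div_eq_mul_inv]
          refine ENNReal.div_le_div_left ?_ _
          exact_mod_cast (Nat.le_mul_of_pos_right q hL).trans
            (Nat.le_mul_of_pos_right _ (by positivity))
        · refine (ENNReal.div_le_div_right hsum _).trans_eq ?_
          rw [show ((p * (N * r) : ℕ) : ℝ≥0∞) = (r * p : ℕ) * N by push_cast; ring,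
            ENNReal.mul_div_mul_left _ _ hrp (ENNReal.natCast_ne_top _),
            ENNReal.div_eq_inv_mul, one_div]
    _ = _ := by ring

theorem scl_le_of_forall_isProdCommutators_pow {x : G} {k : ℕ} (a : Fin k → G) {N r : ℕ}
    (hN : 0 < N) (hr : 0 < r) (D C : ℕ)
    (h : ∀ (p : ℕ) (t : Fin k → ℕ), (∀ i, IsProdCommutators (a i ^ (r * p)) (t i)) →
      IsProdCommutators (x ^ (N * (r * p))) (p * D + C + ∑ i, t i)) :
    scl x ≤ D / (N * r : ℕ) + (1 / N) * ∑ i, scl (a i) := by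
  by_cases htop : ∃ i, scl (a i) = ⊤
  · obtain ⟨i, hi⟩ := htop
    have hS : ∑ i, scl (a i) = ⊤ := ENNReal.sum_eq_top.2 ⟨i, Finset.mem_univ i, hi⟩
    simp [hS]
  push Not at htop
  exact ENNReal.le_of_forall_le_add_mul_inv_natCast
    (ENNReal.add_ne_top.2 ⟨ENNReal.mul_ne_top (by simpa using hN.ne') (by simp), by simp⟩)
    fun q hq => scl_le_add_mul_inv_of_forall_isProdCommutators_pow htop hN hr h hq

end StableCommutatorLength

theorem scl_le_fill_with_zero_general {G : Type*} [Group G] (g : G) (k j : ℕ) (a : Fin k → G)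
    (hg : ℕ) (n : ℤ) (hn : n ≠ 0)
    (hsurf : ∃ (c : Fin k → G) (d : Fin j → G) (e : Fin j → ℤ),
      (∑ i, e i) = n ∧
      IsProdCommutators
        ((List.ofFn (fun i => d i * g ^ (e i) * (d i)⁻¹)).prod *
          (List.ofFn (fun i => c i * a i * (c i)⁻¹)).prod) hg) :
    scl g ≤ ENNReal.ofReal ((2 * hg + (k + j) - 2 : ℝ) / (2 * |(n : ℝ)|)) +
      (1 / (n.natAbs : ℝ≥0∞)) * ∑ i, scl (a i) := by
  -- For `2 * hg + (k + j) < 2` both sides vanish: truncated subtraction on the right,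
  -- `ofReal` of a negative number on the left.
  have hχ : ENNReal.ofReal ((2 * hg + (k + j) - 2 : ℝ) / (2 * |(n : ℝ)|)) =
      ((2 * hg + (k + j) - 2 : ℕ) : ℝ≥0∞) / (n.natAbs * 2 : ℕ) := by
    rw [show (2 * hg + (k + j) - 2 : ℝ) = ((2 * hg + (k + j) : ℕ) : ℝ) - 2 by push_cast; ring,
      show 2 * |(n : ℝ)| = ((n.natAbs * 2 : ℕ) : ℝ) by push_cast [Nat.cast_natAbs]; ring,
      ENNReal.ofReal_div_of_pos (by positivity), ENNReal.ofReal_sub _ zero_le_two,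
      ENNReal.ofReal_natCast, ENNReal.ofReal_natCast, ENNReal.ofReal_ofNat, ENNReal.natCast_sub]
    rfl
  obtain ⟨c, d, e, rfl, hrel⟩ := hsurf
  rw [hχ]
  refine scl_le_of_forall_isProdCommutators_pow a (Int.natAbs_pos.2 hn) two_pos _ (hg + j)
    fun p t ht => ?_
  simpa [Int.natAbs_mul] using
    (isProdCommutators_zpow_of_relation g a c d e hrel p ht).zpow_natAbs

/-- Lemma (fill with zero): if there is a (connected, genus `hg`, non-disk) surface whose
boundary components map to `a₁, …, a_k` and to powers of `g` of total degree `n ≠ 0` —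
algebraically, a product of conjugates of the `aᵢ` and of powers of `g` with exponents
summing to `n` is a product of `hg` commutators — then
`scl(g) ≤ −χ(S)/(2n) + (1/n) Σᵢ scl(aᵢ)`, where `χ(S) = 2 − 2·hg − (k + j)`. -/
theorem scl_le_fill_with_zero {G : Type*} [Group G] (g : G) (k j : ℕ) (a : Fin k → G)
    (hg : ℕ) (n : ℤ) (hn : n ≠ 0)
    (hχ : (2 : ℤ) - 2 * hg - (k + j) ≤ 0)
    (hsurf : ∃ (c : Fin k → G) (d : Fin j → G) (e : Fin j → ℤ),
      (∑ i, e i) = n ∧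
      IsProdCommutators
        ((List.ofFn (fun i => d i * g ^ (e i) * (d i)⁻¹)).prod *
          (List.ofFn (fun i => c i * a i * (c i)⁻¹)).prod) hg) :
    scl g ≤ ENNReal.ofReal ((2 * hg + (k + j) - 2 : ℝ) / (2 * |(n : ℝ)|)) +
      (1 / (n.natAbs : ℝ≥0∞)) * ∑ i, scl (a i) :=
  scl_le_fill_with_zero_general g k j a hg n hn hsurf
end

section
/- Let G act on a tree T, let g be hyperbolic, and suppose there is h ∈ G such that a translate hγ of a fundamental domain γ for g lies on the axis T_g with reversed orientation. Then the element ghgh⁻¹ fixes a point of T_g. -/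
set_option linter.unusedVariables false

variable {V : Type*}

/-! With `ℓ` the translation length, put `p = h g x` and `q = h x`, so `d(p, q) = ℓ`, and
reversal says `d(p, g q) = 2ℓ`. Both `q` and `g p` lie on the geodesic `[p, g q]` at
distance `ℓ` from `p`, so in a tree they coincide; then `g h g h⁻¹` maps `q` to `g p = q`. -/

open SimpleGraph

-- Concatenating geodesics `u → wᵢ → v` gives a geodesic, hence the unique path from `u` to `v`.
lemma SimpleGraph.IsTree.eq_of_onSeg_of_dist_eq {T : SimpleGraph V} (hT : T.IsTree)
    {u v w₁ w₂ : V} (hw₁ : OnSeg T u w₁ v) (hw₂ : OnSeg T u w₂ v)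
    (hdist : T.dist u w₁ = T.dist u w₂) : w₁ = w₂ := by
  obtain ⟨p₁, hp₁⟩ := hT.connected.exists_walk_length_eq_dist u w₁
  obtain ⟨p₂, hp₂⟩ := hT.connected.exists_walk_length_eq_dist w₁ v
  obtain ⟨q₁, hq₁⟩ := hT.connected.exists_walk_length_eq_dist u w₂
  obtain ⟨q₂, hq₂⟩ := hT.connected.exists_walk_length_eq_dist w₂ v
  have hp : (p₁.append p₂).IsPath := (p₁.append p₂).isPath_of_length_eq_dist <| by
    rw [Walk.length_append, hp₁, hp₂, hw₁]
  have hq : (q₁.append q₂).IsPath := (q₁.append q₂).isPath_of_length_eq_dist <| by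
    rw [Walk.length_append, hq₁, hq₂, hw₂]
  have hpq : p₁.append p₂ = q₁.append q₂ :=
    congrArg Subtype.val ((hT.isAcyclic.subsingleton_path u v).elim ⟨_, hp⟩ ⟨_, hq⟩)
  calc w₁ = (p₁.append p₂).getVert p₁.length := by simp [Walk.getVert_append]
    _ = (q₁.append q₂).getVert q₁.length := by rw [hpq, hp₁, hq₁, hdist]
    _ = w₂ := by simp [Walk.getVert_append]

namespace IsTreeAction

variable {T : SimpleGraph V} {G : Type*} [Group G] [MulAction G V]

lemma dist_smul_le (hT : IsTreeAction T G) (g : G) (u v : V) :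
    T.dist (g • u) (g • v) ≤ T.dist u v := by
  obtain ⟨w, hw⟩ := hT.1.connected.exists_walk_length_eq_dist u v
  let f : T →g T := ⟨(g • ·), hT.2.1 g _ _⟩
  calc T.dist (g • u) (g • v) ≤ (w.map f).length := dist_le _
    _ = T.dist u v := by rw [Walk.length_map, hw]

lemma dist_smul (hT : IsTreeAction T G) (g : G) (u v : V) :
    T.dist (g • u) (g • v) = T.dist u v :=
  (hT.dist_smul_le g u v).antisymm <| by
    simpa using hT.dist_smul_le g⁻¹ (g • u) (g • v)

lemma eq_smul_of_ahead (hT : IsTreeAction T G) {g : G} {p q : V} (hp : p ∈ Axis T g)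
    (hq : q ∈ Axis T g) (hpq : T.dist p q = transLen T g) (hahead : Ahead T g p q) :
    q = g • p := by
  have hq_on : OnSeg T p q (g • q) := by
    rw [OnSeg, hahead, hpq, show T.dist q (g • q) = transLen T g from hq]
  have hgp_on : OnSeg T p (g • p) (g • q) := by
    rw [OnSeg, hahead, hT.dist_smul, hpq, show T.dist p (g • p) = transLen T g from hp]
  exact hT.1.eq_of_onSeg_of_dist_eq hq_on hgp_on (hpq.trans hp.symm)

end IsTreeAction

theorem product_fixes_point_of_reversed_fundamental_domain_general {V : Type*} (T : SimpleGraph V)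
    {G : Type*} [Group G] [MulAction G V] (hT : IsTreeAction T G)
    (g : G) (x : V) (hx : x ∈ Axis T g) (h : G)
    (h1 : h • x ∈ Axis T g) (h2 : h • (g • x) ∈ Axis T g)
    (hrev : Ahead T g (h • (g • x)) (h • x)) :
    ∃ v ∈ Axis T g, (g * h * g * h⁻¹) • v = v := by
  have hdist : T.dist (h • g • x) (h • x) = transLen T g := by
    rw [hT.dist_smul, dist_comm]
    exact hx
  have hshift : h • x = g • h • g • x := hT.eq_smul_of_ahead h2 h1 hdist hrev
  refine ⟨h • x, h1, ?_⟩
  simpa [mul_smul] using hshift.symm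

/-- If `g` is hyperbolic and a translate `hγ` of a fundamental domain
`γ = [x, g•x] ⊆ T_g` lies on the axis `T_g` with reversed orientation, then `g h g h⁻¹`
fixes a point of `T_g`. -/
theorem product_fixes_point_of_reversed_fundamental_domain {V : Type*} (T : SimpleGraph V)
    {G : Type*} [Group G] [MulAction G V] (hT : IsTreeAction T G)
    (g : G) (hg : ¬ Elliptic T g) (x : V) (hx : x ∈ Axis T g) (h : G)
    (h1 : h • x ∈ Axis T g) (h2 : h • (g • x) ∈ Axis T g)
    (hrev : Ahead T g (h • (g • x)) (h • x)) :
    ∃ v ∈ Axis T g, (g * h * g * h⁻¹) • v = v :=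
  product_fixes_point_of_reversed_fundamental_domain_general T hT g x hx h h1 h2 hrev
end
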